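/- Suppose f ∈ C²([t0,t1)) (with t1 > t0) solves the ODE with the given initial data. Then g is strictly decreasing on [t0,t1); in particular g is injective (invertible onto its range) on [t0,t1). -/

import Mathlib

open Real Set MeasureTheory intervalIntegral

/-! If f' had a first zero τ in (t0, t1), then f' > 0 on [t0, τ) would force f''(τ) ≤ 0, while
f(τ) > f(t0) > 0 and the ODE give f''(τ) = b f(τ) (1 + f(τ)) / τ² > 0. So f' > 0, hence f > 0,
on [t0, t1): the integrand in the exponent of g is continuous and positive there, the integral
is strictly increasing and g = exp (-A ∫ …) strictly decreasing. -/

theorem exists_first_zero_of_continuousOn_Icc {F : ℝ → ℝ} {a y : ℝ} (hay : a ≤ y)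
    (hF : ContinuousOn F (Icc a y)) (ha : 0 < F a) (hy : F y ≤ 0) :
    ∃ τ ∈ Ioc a y, F τ = 0 ∧ ∀ s ∈ Ico a τ, 0 < F s := by
  set Z := Icc a y ∩ F ⁻¹' Iic 0
  have hZ : IsClosed Z := hF.preimage_isClosed_of_isClosed isClosed_Icc isClosed_Iic
  have hbdd : BddBelow Z := ⟨a, fun t ht => ht.1.1⟩
  have hτ : sInf Z ∈ Z := hZ.csInf_mem ⟨y, ⟨hay, le_rfl⟩, hy⟩ hbdd
  have hbefore : ∀ s ∈ Ico a (sInf Z), 0 < F s := fun s hs => by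
    by_contra! hFs
    exact (csInf_le hbdd ⟨⟨hs.1, hs.2.le.trans hτ.1.2⟩, hFs⟩).not_gt hs.2
  have haτ : a < sInf Z := hτ.1.1.lt_of_ne fun h => (h ▸ hτ.2 : F a ≤ 0).not_gt ha
  obtain ⟨s, hs, hFs⟩ := intermediate_value_Icc' haτ.le (hF.mono (Icc_subset_Icc_right hτ.1.2))
    ⟨hτ.2, ha.le⟩
  obtain hsτ | hsτ := hs.2.lt_or_eq
  · exact absurd hFs (hbefore s ⟨hs.1, hsτ⟩).ne'
  · exact ⟨sInf Z, ⟨haτ, hτ.1.2⟩, hsτ ▸ hFs, hbefore⟩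

theorem HasDerivWithinAt.nonpos_of_pos_left {F : ℝ → ℝ} {σ τ d : ℝ} (hστ : σ < τ)
    (hzero : F τ = 0) (hpos : ∀ s ∈ Ioo σ τ, 0 < F s) (hd : HasDerivWithinAt F d (Iio τ) τ) :
    d ≤ 0 := by
  have hslope := hasDerivWithinAt_iff_tendsto_slope.1 hd
  rw [sdiff_singleton_eq_self self_notMem_Iio] at hslope
  refine le_of_tendsto hslope ?_
  filter_upwards [Ioo_mem_nhdsLT hστ] with s hs
  rw [slope_def_field, hzero, sub_zero]
  exact (div_neg_of_pos_of_neg (hpos s hs) (sub_neg.2 hs.2)).le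

theorem pos_on_Ico_of_deriv_pos_at_first_zero {F : ℝ → ℝ} {a b : ℝ}
    (hF : ContinuousOn F (Ico a b)) (ha : 0 < F a)
    (hzero : ∀ τ ∈ Ioo a b, F τ = 0 → (∀ s ∈ Ico a τ, 0 < F s) →
      ∃ d > 0, HasDerivWithinAt F d (Iio τ) τ) :
    ∀ t ∈ Ico a b, 0 < F t := by
  intro y hy
  by_contra! hFy
  obtain ⟨τ, hτ, hFτ, hbefore⟩ := exists_first_zero_of_continuousOn_Icc hy.1
    (hF.mono (Icc_subset_Ico_right hy.2)) ha hFy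
  obtain ⟨d, hd, hderiv⟩ := hzero τ ⟨hτ.1, hτ.2.trans_lt hy.2⟩ hFτ hbefore
  exact hd.not_ge (hderiv.nonpos_of_pos_left hτ.1 hFτ fun s hs => hbefore s ⟨hs.1.le, hs.2⟩)

theorem pos_of_deriv_pos_on_Ioo {f : ℝ → ℝ} {a b : ℝ} (hab : a ≤ b)
    (hf : ContinuousOn f (Icc a b)) (ha : 0 < f a) (hf' : ∀ s ∈ Ioo a b, 0 < deriv f s) :
    0 < f b :=
  ha.trans_le <| (strictMonoOn_of_deriv_pos (convex_Icc a b) hf (by rwa [interior_Icc])).monotoneOn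
    ⟨le_rfl, hab⟩ ⟨hab, le_rfl⟩ hab

theorem continuousOn_deriv_Ico {f : ℝ → ℝ} {a b : ℝ} (hf : ContDiffOn ℝ 1 f (Ico a b))
    (ha : DifferentiableAt ℝ f a) : ContinuousOn (deriv f) (Ico a b) := by
  refine (hf.continuousOn_derivWithin (uniqueDiffOn_Ico a b) le_rfl).congr fun x hx => ?_
  obtain hax | rfl := hx.1.lt_or_eq
  · exact (derivWithin_of_mem_nhds (Ico_mem_nhds hax hx.2)).symm
  · exact (ha.derivWithin (uniqueDiffOn_Ico a b a hx)).symm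

theorem strictMonoOn_integral_of_pos {h : ℝ → ℝ} {a b : ℝ} (hc : ContinuousOn h (Ico a b))
    (hpos : ∀ s ∈ Ico a b, 0 < h s) : StrictMonoOn (fun x => ∫ s in a..x, h s) (Ico a b) := by
  intro x hx y hy hxy
  have hint : ∀ z ∈ Ico a b, IntervalIntegrable h volume a z := fun z hz =>
    (hc.mono (by rw [uIcc_of_le hz.1]; exact Icc_subset_Ico_right hz.2)).intervalIntegrable
  have hxy_int : 0 < ∫ s in x..y, h s := by
    refine intervalIntegral_pos_of_pos_on ((hint x hx).symm.trans (hint y hy)) (fun s hs => ?_) hxy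
    exact hpos s ⟨hx.1.trans hs.1.le, hs.2.trans hy.2⟩
  rw [← integral_interval_sub_left (hint y hy) (hint x hx)] at hxy_int
  simpa using hxy_int

def SolvesODEOn (a b c : ℝ) (f : ℝ → ℝ) (s : Set ℝ) : Prop :=
  ∀ t ∈ s, deriv (deriv f) t + (a / t) * deriv f t
    - (b / t ^ 2) * f t * (1 + f t) - (c / (1 + f t)) * (deriv f t) ^ 2 = 0

section ODE

variable {t0 t1 a b c : ℝ} {f : ℝ → ℝ}

theorem hasDerivAt_deriv_of_ode (hreg : ContDiffOn ℝ 2 f (Ico t0 t1))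
    (hode : SolvesODEOn a b c f (Ico t0 t1))
    {τ : ℝ} (hτ : τ ∈ Ioo t0 t1) (hcrit : deriv f τ = 0) :
    HasDerivAt (deriv f) (b / τ ^ 2 * f τ * (1 + f τ)) τ := by
  have hreg' : ContDiffOn ℝ (1 + 1) f (Ioo t0 t1) := hreg.mono Ioo_subset_Ico_self
  have hdiff : DifferentiableAt ℝ (deriv f) τ :=
    (((contDiffOn_succ_iff_deriv_of_isOpen isOpen_Ioo).1 hreg').2.2.differentiableOn
      one_ne_zero τ hτ).differentiableAt (isOpen_Ioo.mem_nhds hτ)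
  have h := hode τ (Ioo_subset_Ico_self hτ)
  rw [hcrit] at h
  have hval : deriv (deriv f) τ = b / τ ^ 2 * f τ * (1 + f τ) := by linarith
  exact hval ▸ hdiff.hasDerivAt

theorem deriv_pos_of_ode (ht0 : 0 < t0) (hb : 0 < b) (hreg : ContDiffOn ℝ 2 f (Ico t0 t1))
    (hode : SolvesODEOn a b c f (Ico t0 t1))
    (hf0 : 0 < f t0) (hf0' : 0 < deriv f t0) : ∀ t ∈ Ico t0 t1, 0 < deriv f t := by
  have hdiff0 : DifferentiableAt ℝ f t0 := differentiableAt_of_deriv_ne_zero hf0'.ne'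
  refine pos_on_Ico_of_deriv_pos_at_first_zero
    (continuousOn_deriv_Ico (hreg.of_le one_le_two) hdiff0) hf0' fun τ hτ hcrit hbefore => ?_
  have hfτ : 0 < f τ := pos_of_deriv_pos_on_Ioo hτ.1.le
    (hreg.continuousOn.mono (Icc_subset_Ico_right hτ.2)) hf0 fun s hs => hbefore s ⟨hs.1.le, hs.2⟩
  have hτ0 : 0 < τ := ht0.trans hτ.1
  exact ⟨_, by positivity, (hasDerivAt_deriv_of_ode hreg hode hτ hcrit).hasDerivWithinAt⟩

end ODE

theorem stmt_3_general
    (t0 t1 a b c A fi fi0 : ℝ) (f g : ℝ → ℝ)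
    (ht0 : 0 < t0)
    (hb : 0 < b)
    (hfi : 0 < fi) (hfi0 : 0 < fi0)
    (hA : 0 < A)
    (hg : ∀ t, g t = Real.exp (-A * ∫ s in t0..t, f s * (1 + f s) / (s ^ 2 * deriv f s)))
    (hreg : ContDiffOn ℝ 2 f (Set.Ico t0 t1))
    (hode : ∀ t ∈ Set.Ico t0 t1,
      deriv (deriv f) t + (a / t) * deriv f t
        - (b / t ^ 2) * f t * (1 + f t)
        - (c / (1 + f t)) * (deriv f t) ^ 2 = 0)
    (hft0 : f t0 = fi) (hft0' : deriv f t0 = fi0) :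
    StrictAntiOn g (Set.Ico t0 t1) ∧ Set.InjOn g (Set.Ico t0 t1) := by
  subst hft0 hft0'
  have hf' := deriv_pos_of_ode ht0 hb hreg hode hfi hfi0
  have hf : ∀ t ∈ Ico t0 t1, 0 < f t := fun t ht => pos_of_deriv_pos_on_Ioo ht.1
    (hreg.continuousOn.mono (Icc_subset_Ico_right ht.2)) hfi
    fun s hs => hf' s ⟨hs.1.le, hs.2.trans ht.2⟩
  have hcont : ContinuousOn (fun s => f s * (1 + f s) / (s ^ 2 * deriv f s)) (Ico t0 t1) := by
    have hfc := hreg.continuousOn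
    have hf'c := continuousOn_deriv_Ico (hreg.of_le one_le_two)
      (differentiableAt_of_deriv_ne_zero hfi0.ne')
    exact (hfc.mul (continuousOn_const.add hfc)).div ((continuousOn_id.pow 2).mul hf'c)
      fun s hs => (mul_pos (pow_pos (ht0.trans_le hs.1) 2) (hf' s hs)).ne'
  have hI := strictMonoOn_integral_of_pos hcont fun s hs => by
    have := ht0.trans_le hs.1; have := hf s hs; have := hf' s hs
    positivity
  have hanti : StrictAntiOn g (Ico t0 t1) := fun x hx y hy hxy => by
    rw [hg, hg]
    exact exp_lt_exp.2 (mul_lt_mul_of_neg_left (hI hx hy hxy) (neg_neg_of_pos hA))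
  exact ⟨hanti, hanti.injOn⟩

/-- If `f ∈ C²([t0,t1))` solves the ODE with the given initial data, then
`g` is strictly decreasing on `[t0,t1)`; in particular `g` is injective on `[t0,t1)`. -/
theorem stmt_3
    (t0 t1 a b c A B fi fi0 : ℝ) (f g : ℝ → ℝ)
    (ht0 : 0 < t0) (ht01 : t0 < t1)
    (ha : 1 < a) (hb : 0 < b) (hc : 1 < c) (hc' : c < 3 / 2)
    (hfi : 0 < fi) (hfi0 : 0 < fi0)
    (hA : 0 < A) (hA' : A < 2 * b / (3 - 2 * c))
    (hB : B = (1 + fi) ^ c / (t0 ^ a * fi0))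
    (hg : ∀ t, g t = Real.exp (-A * ∫ s in t0..t, f s * (1 + f s) / (s ^ 2 * deriv f s)))
    (hreg : ContDiffOn ℝ 2 f (Set.Ico t0 t1))
    (hode : ∀ t ∈ Set.Ico t0 t1,
      deriv (deriv f) t + (a / t) * deriv f t
        - (b / t ^ 2) * f t * (1 + f t)
        - (c / (1 + f t)) * (deriv f t) ^ 2 = 0)
    (hft0 : f t0 = fi) (hft0' : deriv f t0 = fi0) :
    StrictAntiOn g (Set.Ico t0 t1) ∧ Set.InjOn g (Set.Ico t0 t1) :=
  stmt_3_general t0 t1 a b c A fi fi0 f g ht0 hb hfi hfi0 hA hg hreg hode hft0 hft0'
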